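/- arXiv:0906.0101 — 3 statements merged into one kernel-verified Lean document; each statement's English description precedes it below -/
import Mathlib

section
/- Let G be a finitely generated group with unique roots (i.e., a^n = b^n with n ≠ 0 implies a = b). If G has a finite-index subgroup H that is conjugacy separable, then G is conjugacy separable. -/
/-!
Let `n` be the index of the normal core `N` of `H`. By uniqueness of roots, `g₁` and `g₂` are
conjugate as soon as `g₁ ^ n` and `g₂ ^ n` are, while a conjugacy of `g₁`, `g₂` in a finite
quotient passes to their `n`-th powers; so it suffices to separate the elements `g₁ ^ n`, `g₂ ^ n`
of `N`. For every coset representative `t` of `H`, the elements `g₁ ^ n` and `t⁻¹ g₂ ^ n t` of `H`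
are not conjugate in `H`, hence not in some finite quotient `φ_t` of `H`. Let `M` be the normal
core in `G` of `⋂ₜ ker φ_t`. If `x g₁ ^ n x⁻¹ ≡ g₂ ^ n (mod M)`, write `x = t h` with `h ∈ H`:
then `h g₁ ^ n h⁻¹ ≡ t⁻¹ g₂ ^ n t (mod M)`, so the two become conjugate under `φ_t`.
-/

/-- `G` is conjugacy separable: any two non-conjugate elements remain
non-conjugate in some finite quotient. -/
def ConjugacySeparable (G : Type) [Group G] : Prop :=
  ∀ g₁ g₂ : G, ¬ IsConj g₁ g₂ →
    ∃ (Q : Type) (_ : Group Q) (_ : Finite Q) (φ : G →* Q), ¬ IsConj (φ g₁) (φ g₂)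

theorem isConj_of_isConj_pow_of_uniqueRoots {G : Type*} [Group G]
    (hur : ∀ (a b : G) (n : ℤ), n ≠ 0 → a ^ n = b ^ n → a = b)
    {g₁ g₂ : G} {n : ℕ} (hn : n ≠ 0) (h : IsConj (g₁ ^ n) (g₂ ^ n)) : IsConj g₁ g₂ := by
  obtain ⟨c, hc⟩ := isConj_iff.mp h
  refine isConj_iff.mpr ⟨c, hur _ _ n (by exact_mod_cast hn) ?_⟩
  rw [zpow_natCast, zpow_natCast, conj_pow, hc]

namespace Subgroup

variable {G : Type*} [Group G]

theorem exists_normal_finiteIndex_subgroupOf_le {H : Subgroup G} [H.FiniteIndex]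
    (L : Subgroup H) [L.FiniteIndex] :
    ∃ M : Subgroup G, M.Normal ∧ M.FiniteIndex ∧ M.subgroupOf H ≤ L := by
  have : (L.map H.subtype).FiniteIndex := by
    constructor
    rw [index_map_subtype]
    exact mul_ne_zero FiniteIndex.index_ne_zero FiniteIndex.index_ne_zero
  refine ⟨(L.map H.subtype).normalCore, inferInstance, inferInstance, fun h hh => ?_⟩
  obtain ⟨h', hh', hh'h⟩ := normalCore_le _ (mem_subgroupOf.mp hh)
  rwa [← Subtype.ext hh'h]

theorem exists_conj_mem_of_isConj_mk (H : Subgroup G) {M : Subgroup G} [M.Normal] {a b : G}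
    (hc : IsConj (a : G ⧸ M) (b : G ⧸ M)) :
    ∃ q : G ⧸ H, ∃ h ∈ H, (h * a * h⁻¹)⁻¹ * (q.out⁻¹ * b * q.out) ∈ M := by
  obtain ⟨c, hc⟩ := isConj_iff.mp hc
  obtain ⟨x, rfl⟩ := QuotientGroup.mk_surjective c
  have hx : (x * a * x⁻¹)⁻¹ * b ∈ M := QuotientGroup.eq.mp (by simpa using hc)
  obtain ⟨h, hh⟩ := QuotientGroup.mk_out_eq_mul H x
  refine ⟨x, (h : G)⁻¹, inv_mem h.2, ?_⟩
  convert Normal.conj_mem' ‹_› _ hx (x * h) using 1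
  rw [hh]
  group

theorem not_isConj_conj_of_not_isConj {H : Subgroup G} {a b : G} (hab : ¬ IsConj a b) (t : G)
    (ha : a ∈ H) (hb : t⁻¹ * b * t ∈ H) :
    ¬ IsConj (⟨a, ha⟩ : H) ⟨t⁻¹ * b * t, hb⟩ := fun hc =>
  hab <| (H.subtype.map_isConj hc).trans <|
    isConj_iff.mpr ⟨t, show t * (t⁻¹ * b * t) * t⁻¹ = b by group⟩

end Subgroup

open Subgroup in
theorem ConjugacySeparable.exists_normal_finiteIndex_not_isConj_mk {G : Type} [Group G]
    {H : Subgroup G} [H.FiniteIndex] (hcs : ConjugacySeparable H) {a b : G} (ha : a ∈ H)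
    (hb : b ∈ H.normalCore) (hab : ¬ IsConj a b) :
    ∃ (M : Subgroup G) (_ : M.Normal), M.FiniteIndex ∧ ¬ IsConj (a : G ⧸ M) (b : G ⧸ M) := by
  have hbt (q : G ⧸ H) : q.out⁻¹ * b * q.out ∈ H := by simpa using hb q.out⁻¹
  choose Q _ _ φ hφ using fun q : G ⧸ H =>
    hcs _ _ (not_isConj_conj_of_not_isConj hab q.out ha (hbt q))
  have : (⨅ q, (φ q).ker).FiniteIndex := finiteIndex_iInf fun q => finiteIndex_ker (φ q)
  obtain ⟨M, hM, hMfin, hML⟩ := exists_normal_finiteIndex_subgroupOf_le (⨅ q, (φ q).ker)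
  refine ⟨M, hM, hMfin, fun hc => ?_⟩
  obtain ⟨q, h, hh, hmem⟩ := exists_conj_mem_of_isConj_mk H hc
  have hker : (⟨h, hh⟩ * ⟨a, ha⟩ * (⟨h, hh⟩ : H)⁻¹)⁻¹ * ⟨_, hbt q⟩ ∈ (φ q).ker :=
    iInf_le (fun q => (φ q).ker) q (hML (mem_subgroupOf.mpr hmem))
  refine hφ q (isConj_iff.mpr ⟨φ q ⟨h, hh⟩, ?_⟩)
  rw [← map_inv, ← map_mul, ← map_mul]
  exact ((φ q).eq_iff.mpr hker).symm

theorem stmt1_general {G : Type} [Group G]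
    (hur : ∀ (a b : G) (n : ℤ), n ≠ 0 → a ^ n = b ^ n → a = b)
    (H : Subgroup G) (hH : H.FiniteIndex) (hcs : ConjugacySeparable H) :
    ConjugacySeparable G := by
  intro g₁ g₂ hng
  set n := H.normalCore.index
  have hpow : ¬ IsConj (g₁ ^ n) (g₂ ^ n) := fun h =>
    hng (isConj_of_isConj_pow_of_uniqueRoots hur Subgroup.FiniteIndex.index_ne_zero h)
  obtain ⟨M, _, _, hM⟩ := hcs.exists_normal_finiteIndex_not_isConj_mk
    (H.normalCore_le (H.normalCore.pow_index_mem g₁)) (H.normalCore.pow_index_mem g₂) hpow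
  exact ⟨G ⧸ M, inferInstance, inferInstance, QuotientGroup.mk' M,
    fun h => hM (by simpa using h.pow n)⟩

/-- A finitely generated group with unique roots having a conjugacy separable
finite-index subgroup is conjugacy separable. -/
theorem stmt1 {G : Type} [Group G] (hfg : Group.FG G)
    (hur : ∀ (a b : G) (n : ℤ), n ≠ 0 → a ^ n = b ^ n → a = b)
    (H : Subgroup G) (hH : H.FiniteIndex) (hcs : ConjugacySeparable H) :
    ConjugacySeparable G :=
  stmt1_general hur H hH hcs
end

section
/- A torsion-free group that is virtually cyclic is cyclic. -/
/-!
The normal core `N = ⟨z⟩` of the cyclic finite-index subgroup is cyclic, normal and of finite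
index `m`. For `g : G` write `g ^ m = z ^ k`. Conjugation by `g` fixes `g ^ m`, so
`(g z g⁻¹) ^ k = z ^ k`; since `g z g⁻¹ ∈ N` commutes with `z`, torsion-freeness gives
`g z g⁻¹ = z` (if `k = 0` then `g ^ m = 1` and `g = 1`). Thus `N` is central of finite index.
The transfer `g ↦ g ^ [G : Z(G)]` then embeds `G` into the abelian group `Z(G)`, and in an abelian
torsion-free group `g ↦ g ^ [Z(G) : N]` embeds it into the cyclic group `N`.
-/

open Subgroup

section TorsionFree

variable {G : Type*} [Group G]

theorem eq_one_of_zpow_eq_one_of_torsionFree (hG : ∀ g : G, g ≠ 1 → ¬IsOfFinOrder g) {g : G}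
    {k : ℤ} (hk : k ≠ 0) (h : g ^ k = 1) : g = 1 := by
  by_contra hg
  exact hG g hg (isOfFinOrder_iff_zpow_eq_one.mpr ⟨k, hk, h⟩)

theorem eq_one_of_pow_eq_one_of_torsionFree (hG : ∀ g : G, g ≠ 1 → ¬IsOfFinOrder g) {g : G}
    {n : ℕ} (hn : n ≠ 0) (h : g ^ n = 1) : g = 1 :=
  eq_one_of_zpow_eq_one_of_torsionFree hG (Int.natCast_ne_zero.mpr hn) (by rwa [zpow_natCast])

theorem Commute.eq_of_zpow_eq_zpow_of_torsionFree (hG : ∀ g : G, g ≠ 1 → ¬IsOfFinOrder g)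
    {a b : G} (hab : Commute a b) {k : ℤ} (hk : k ≠ 0) (h : a ^ k = b ^ k) : a = b := by
  rw [← div_eq_one]
  refine eq_one_of_zpow_eq_one_of_torsionFree hG hk ?_
  rw [div_eq_mul_inv, hab.inv_right.mul_zpow, inv_zpow, h, mul_inv_cancel]

theorem torsionFree_subgroup (hG : ∀ g : G, g ≠ 1 → ¬IsOfFinOrder g) (K : Subgroup G) :
    ∀ g : K, g ≠ 1 → ¬IsOfFinOrder g := fun g hg hfin =>
  hG g (by exact_mod_cast hg) (Submonoid.isOfFinOrder_coe.mpr hfin)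

theorem Subgroup.le_center_of_torsionFree (hG : ∀ g : G, g ≠ 1 → ¬IsOfFinOrder g)
    (N : Subgroup G) [N.Normal] [IsCyclic N] [N.FiniteIndex] : N ≤ center G := by
  obtain ⟨z, rfl⟩ := (N.isCyclic_iff_exists_zpowers_eq_top).mp ‹_›
  rw [zpowers_le, mem_center_iff]
  intro g
  obtain ⟨k, hk⟩ := mem_zpowers_iff.mp ((zpowers z).pow_index_mem g)
  by_cases hk0 : k = 0
  · rw [hk0, zpow_zero, eq_comm] at hk
    rw [eq_one_of_pow_eq_one_of_torsionFree hG (zpowers z).index_ne_zero_of_finite hk, one_mul,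
      mul_one]
  obtain ⟨j, hj⟩ := mem_zpowers_iff.mp (Normal.conj_mem ‹_› z (mem_zpowers z) g)
  have hcomm : Commute (g * z * g⁻¹) z := hj ▸ (Commute.refl z).zpow_left j
  have hfix : g * z * g⁻¹ = z := by
    refine hcomm.eq_of_zpow_eq_zpow_of_torsionFree hG hk0 ?_
    rw [conj_zpow, hk]
    group
  exact mul_inv_eq_iff_eq_mul.mp hfix

end TorsionFree

open scoped IsMulCommutative in
theorem IsCyclic.of_torsionFree_of_finiteIndex {G : Type*} [Group G] [IsMulCommutative G]
    (hG : ∀ g : G, g ≠ 1 → ¬IsOfFinOrder g) (H : Subgroup G) [IsCyclic H] [H.FiniteIndex] :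
    IsCyclic G := by
  let f : G →* H := (powMonoidHom H.index).codRestrict H H.pow_index_mem
  refine isCyclic_of_injective f ((injective_iff_map_eq_one f).mpr fun g hg => ?_)
  exact eq_one_of_pow_eq_one_of_torsionFree hG H.index_ne_zero_of_finite (congrArg Subtype.val hg)

theorem IsCyclic.of_torsionFree_of_le_center {G : Type*} [Group G]
    (hG : ∀ g : G, g ≠ 1 → ¬IsOfFinOrder g) (H : Subgroup G) (hH : H ≤ center G) [IsCyclic H]
    [H.FiniteIndex] : IsCyclic G := by
  have : (center G).FiniteIndex := finiteIndex_of_le hH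
  have : IsCyclic (H.subgroupOf (center G)) :=
    isCyclic_of_injective (subgroupOfEquivOfLe hH).toMonoidHom (subgroupOfEquivOfLe hH).injective
  have : IsCyclic (center G) :=
    .of_torsionFree_of_finiteIndex (torsionFree_subgroup hG (center G)) (H.subgroupOf (center G))
  refine isCyclic_of_injective (MonoidHom.transferCenterPow G)
    ((injective_iff_map_eq_one _).mpr fun g hg => ?_)
  refine eq_one_of_pow_eq_one_of_torsionFree hG (center G).index_ne_zero_of_finite ?_
  rw [← MonoidHom.transferCenterPow_apply, hg, OneMemClass.coe_one]

/-- A torsion-free virtually cyclic group is cyclic. -/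
theorem stmt3 {G : Type} [Group G] (htf : ∀ g : G, g ≠ 1 → ¬IsOfFinOrder g)
    (h : ∃ H : Subgroup G, IsCyclic H ∧ H.FiniteIndex) : IsCyclic G := by
  obtain ⟨H, hcyc, hfin⟩ := h
  have : IsCyclic H.normalCore := isCyclic_of_le H.normalCore_le
  exact .of_torsionFree_of_le_center htf H.normalCore (H.normalCore.le_center_of_torsionFree htf)
end

section
/- In a free group F, if a^n = b^n for elements a, b ∈ F and a nonzero integer n, then a = b. -/
/-- Free groups have unique roots. -/
theorem stmt12 {α : Type} (a b : FreeGroup α) (n : ℤ) (hn : n ≠ 0)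
    (h : a ^ n = b ^ n) : a = b :=
  zpow_left_injective hn h
end
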